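/- Let T ≥ 0, let ρ : {0,…,T} → ℝ be a finite real sequence, and let N ≥ 2 be the number of time steps contained in the interval [0,b]. Define the stlcg recursion for □_{[0,b]}: the hidden state h_i ∈ ℝ^{N−1} is initialized with every entry equal to ρ_T; at step i the output is o_{T−i} = min(h_{i,1},…,h_{i,N−1}, ρ_{T−i}), and the next hidden state is the shift h_{i+1} = (h_{i,2},…,h_{i,N−1}, ρ_{T−i}). Then for every index j with 0 ≤ j ≤ T, o_j = min_{j ≤ k ≤ j+N−1} ρ_{min(k,T)}, i.e., replacing max by min in the Eventually recursion yields the sliding-window minimum with last-value padding, which is the robustness ρ(s_{t_j}, □_{[0,b]} φ). -/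

import Mathlib

/-! By induction on `i`, slot `k` of the hidden state after `i` steps holds `ρ (min (T - i + (N - k)) T)`
(the clamp to `T` comes from the initial fill with `ρ T`), so the hidden state is the window of `ρ`
just after time `T - i`, stored in reverse. Adding `ρ (T - i)` completes the window of length `N`
starting at `T - i`, so the output is the sliding-window minimum. -/

open Finset

lemma Finset.inf'_Icc_eq_min_inf'_reflect {α : Type*} [LinearOrder α] (f : ℕ → α) (j N : ℕ)
    (hs : (Icc j (j + N - 1)).Nonempty) (ht : (Icc 1 (N - 1)).Nonempty) :
    (Icc j (j + N - 1)).inf' hs f = min ((Icc 1 (N - 1)).inf' ht fun k => f (j + (N - k))) (f j) := by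
  have hN : 2 ≤ N := by have := nonempty_Icc.mp ht; omega
  have hwindow : Icc j (j + N - 1) = insert j ((Icc 1 (N - 1)).image fun k => j + (N - k)) := by
    ext m
    simp only [mem_Icc, mem_insert, mem_image]
    constructor
    · intro hm
      rcases hm.1.eq_or_lt with rfl | hlt
      · exact Or.inl rfl
      · exact Or.inr ⟨N - (m - j), by omega, by omega⟩
    · rintro (rfl | ⟨k, hk, rfl⟩) <;> omega
  rw [inf'_congr _ hwindow fun _ _ => rfl,
    inf'_insert (H := ht.image _), inf'_image, inf_comm]
  rfl

section AlwaysRecursion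

variable {T N : ℕ} {ρ : ℕ → ℝ} {h : ℕ → ℕ → ℝ}

lemma stlcg_hidden_state_eq (hinit : ∀ k, 1 ≤ k → k ≤ N - 1 → h 0 k = ρ T)
    (hshift : ∀ i, i ≤ T → ∀ k, 1 ≤ k → k ≤ N - 2 → h (i + 1) k = h i (k + 1))
    (hlast : ∀ i, i ≤ T → h (i + 1) (N - 1) = ρ (T - i)) :
    ∀ i, i ≤ T → ∀ k, 1 ≤ k → k ≤ N - 1 → h i k = ρ (min (T - i + (N - k)) T) := by
  intro i
  induction i with
  | zero =>
    intro _ k hk1 hk2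
    rw [hinit k hk1 hk2]
    congr 1
    omega
  | succ i ih =>
    intro hi k hk1 hk2
    rcases hk2.eq_or_lt with rfl | hk
    · rw [hlast i (by omega)]
      congr 1
      omega
    · rw [hshift i (by omega) k hk1 (by omega), ih (by omega) (k + 1) (by omega) (by omega)]
      congr 1
      omega

end AlwaysRecursion

/-- Correctness of the `stlcg` recursion for `□_{[0,b]}` with `N ≥ 2` time steps in
`[0,b]`: it is identical to the `◊_{[0,b]}` recursion with `max` replaced by `min`.
The hidden state `h i` has entries indexed `1,…,N-1`, initialized to `ρ T`; at step `i`
the output is `o (T-i) = min (min_{1≤k≤N-1} h i k) (ρ (T-i))` and the hidden state is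
shifted with `ρ (T-i)` entering at the end. Then for every `j ≤ T`, `o j` equals the
sliding-window minimum `min_{j ≤ k ≤ j+N-1} ρ (min k T)` of length `N` with last-value
padding, i.e. the robustness `ρ(s_{t_j}, □_{[0,b]} φ)`. -/
theorem stlcg_always_bounded (T N : ℕ) (hN : 2 ≤ N) (ρ o : ℕ → ℝ) (h : ℕ → ℕ → ℝ)
    (hinit : ∀ k, 1 ≤ k → k ≤ N - 1 → h 0 k = ρ T)
    (hout : ∀ i, i ≤ T →
      o (T - i) = min ((Finset.Icc 1 (N - 1)).inf' (Finset.nonempty_Icc.mpr (by omega)) (h i))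
        (ρ (T - i)))
    (hshift : ∀ i, i ≤ T → ∀ k, 1 ≤ k → k ≤ N - 2 → h (i + 1) k = h i (k + 1))
    (hlast : ∀ i, i ≤ T → h (i + 1) (N - 1) = ρ (T - i)) :
    ∀ j, j ≤ T →
      o j = (Finset.Icc j (j + N - 1)).inf' (Finset.nonempty_Icc.mpr (by omega))
        (fun k => ρ (min k T)) := by
  intro j hj
  obtain ⟨i, hi, rfl⟩ : ∃ i ≤ T, j = T - i := ⟨T - j, by omega, by omega⟩
  rw [hout i hi, inf'_Icc_eq_min_inf'_reflect, Nat.min_eq_left (Nat.sub_le T i)]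
  congr 1
  refine inf'_congr _ rfl fun k hk => ?_
  rw [mem_Icc] at hk
  exact stlcg_hidden_state_eq hinit hshift hlast i hi k hk.1 hk.2
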